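/- arXiv:2310.11137 — 2 statements merged into one kernel-verified Lean document; each statement's English description precedes it below -/
import Mathlib

section
/- Let φ, ψ : ℝ → ℝ be functions satisfying ψ(α)·φ(α) = α·φ'(0⁺) for all α > 0, with both functions (k+1)-times differentiable on a right neighborhood of 0 with one-sided derivatives extending continuously to 0, φ(0)=0, and φ'(0⁺) ≠ 0. Writing ψ_i and φ_i for the i-th right derivatives at 0, the identity ψ_k = -(1/((k+1)·φ_1)) · ∑_{i=0}^{k-1} C(k+1,i) · ψ_i · φ_{k+1-i} holds for every k ≥ 1. -/
open Finset Set

/-! On `[0, ∞)` the product `ψ φ` agrees with the linear map `α ↦ α φ₁` (at `0` because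
`φ 0 = 0`), so its `(k+1)`-th derivative vanishes once `k ≥ 1`. Expanding it by the Leibniz rule,
the term `i = k+1` is `ψ_{k+1} φ₀ = 0` and the term `i = k` is `(k+1) ψ_k φ₁`, which can be solved
for `ψ_k` since `φ₁ ≠ 0`. -/

theorem eq_neg_div_of_sum_choose_mul_eq_zero {K : Type*} [Field K] [CharZero K]
    (a b : ℕ → K) (k : ℕ) (hb₀ : b 0 = 0) (hb₁ : b 1 ≠ 0)
    (h : ∑ i ∈ range (k + 2), ((k + 1).choose i : K) * a i * b (k + 1 - i) = 0) :
    a k = -(1 / ((k + 1 : K) * b 1)) *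
      ∑ i ∈ range k, ((k + 1).choose i : K) * a i * b (k + 1 - i) := by
  rw [sum_range_succ, sum_range_succ, Nat.sub_self, hb₀, mul_zero, add_zero,
    Nat.choose_succ_self_right, show k + 1 - k = 1 by omega] at h
  have hk : (k + 1 : K) ≠ 0 := Nat.cast_add_one_ne_zero k
  field_simp
  push_cast at h
  linear_combination h

theorem sum_choose_mul_iteratedDerivWithin_eq_zero_of_eqOn_mul_const {𝕜 : Type*} [NontriviallyNormedField 𝕜]
    {f g : 𝕜 → 𝕜} {s : Set 𝕜} {x c : 𝕜} {n : ℕ} (hs : UniqueDiffOn 𝕜 s) (hx : x ∈ s)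
    (hn : 2 ≤ n) (hf : ContDiffWithinAt 𝕜 n f s x) (hg : ContDiffWithinAt 𝕜 n g s x)
    (hfg : EqOn (f * g) (fun y ↦ y * c) s) :
    ∑ i ∈ range (n + 1), (n.choose i : 𝕜) * iteratedDerivWithin i f s x *
      iteratedDerivWithin (n - i) g s x = 0 := by
  rw [← iteratedDerivWithin_mul hx hs hf hg, iteratedDerivWithin_congr hfg hx,
    iteratedDerivWithin_mul_const_field, iteratedDerivWithin_fun_id hx hs]
  simp [show n ≠ 0 by omega, show n ≠ 1 by omega]

/-- Takács' recursion (algebraic core): if `ψ(α)φ(α) = α φ'(0⁺)` for `α > 0`,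
with both functions `(k+1)`-times continuously differentiable from the right at `0`,
`φ(0) = 0` and `φ'(0⁺) ≠ 0`, then the `k`-th right derivative of `ψ` at `0` satisfies
`ψ_k = -(1/((k+1)φ₁)) ∑_{i=0}^{k-1} C(k+1,i) ψ_i φ_{k+1-i}`. -/
theorem stmt_0 (φ ψ : ℝ → ℝ) (k : ℕ) (hk : 1 ≤ k)
    (hφ : ContDiffOn ℝ (k + 1) φ (Set.Ici (0:ℝ)))
    (hψ : ContDiffOn ℝ (k + 1) ψ (Set.Ici (0:ℝ)))
    (hφ0 : φ 0 = 0)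
    (hφ1 : iteratedDerivWithin 1 φ (Set.Ici (0:ℝ)) 0 ≠ 0)
    (hid : ∀ α : ℝ, 0 < α → ψ α * φ α = α * iteratedDerivWithin 1 φ (Set.Ici (0:ℝ)) 0) :
    iteratedDerivWithin k ψ (Set.Ici (0:ℝ)) 0 =
      -(1 / ((k + 1 : ℝ) * iteratedDerivWithin 1 φ (Set.Ici (0:ℝ)) 0)) *
        ∑ i ∈ range k, (Nat.choose (k + 1) i : ℝ) *
          iteratedDerivWithin i ψ (Set.Ici (0:ℝ)) 0 *
          iteratedDerivWithin (k + 1 - i) φ (Set.Ici (0:ℝ)) 0 := by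
  have h₀ : (0 : ℝ) ∈ Set.Ici 0 := self_mem_Ici
  have hprod : EqOn (ψ * φ) (fun α ↦ α * iteratedDerivWithin 1 φ (Set.Ici 0) 0) (Set.Ici 0) := by
    rintro α (hα : 0 ≤ α)
    rcases hα.eq_or_lt with rfl | hα
    · simp [hφ0]
    · exact hid α hα
  have hleibniz := sum_choose_mul_iteratedDerivWithin_eq_zero_of_eqOn_mul_const (n := k + 1)
    (uniqueDiffOn_Ici 0) h₀ (by omega) (by exact_mod_cast hψ 0 h₀) (by exact_mod_cast hφ 0 h₀) hprod
  exact eq_neg_div_of_sum_choose_mul_eq_zero (iteratedDerivWithin · ψ (Set.Ici 0) 0)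
    (iteratedDerivWithin · φ (Set.Ici 0) 0) k hφ0 hφ1 (by exact_mod_cast hleibniz)
end

section
/- Fix a real number 𝔯 > 0 and let ζ be an exponential random variable with rate 𝔯, independent of a nonnegative random variable V with finite moments μ_j = E[V^j] and of U uniform on [0,1]. Then for every nonnegative integer k, E[V·(ζ + V·U)^k] = ∑_{i=0}^{k} (k! / ((k-i)! · (k-i+1))) · μ_{k-i+1} · 𝔯^{-i}. -/
open MeasureTheory ProbabilityTheory Finset

/-!
Expanding binomially, `V (ζ + V U)^k = ∑ᵢ C(k,i) ζ^i V^(k-i+1) U^(k-i)`. By independence each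
mixed moment factors, `E[ζ^i] = i!/𝔯^i` is a Gamma integral and `E[U^(k-i)] = 1/(k-i+1)`;
finally `C(k,i) i! = k!/(k-i)!`.
-/

open Real

namespace ProbabilityTheory

section IndependentProducts

variable {Ω ι : Type*} [MeasurableSpace Ω] {μ : Measure Ω} {X : ι → Ω → ℝ}

lemma iIndepFun.integrable_finsetProd (hX : iIndepFun X μ) (hm : ∀ i, Measurable (X i))
    (hint : ∀ i, Integrable (X i) μ) (s : Finset ι) : Integrable (∏ i ∈ s, X i) μ := by
  have := hX.isProbabilityMeasure
  induction s using Finset.cons_induction with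
  | empty => exact integrable_const 1
  | cons j s hj ih =>
    rw [prod_cons]
    exact (hX.indepFun_finsetProd_of_notMem hm hj).symm.integrable_mul (hint j) ih

variable [Fintype ι]

lemma iIndepFun.integrable_fun_prod_pow (hX : iIndepFun X μ) (hm : ∀ i, Measurable (X i))
    (n : ι → ℕ) (hint : ∀ i, Integrable (fun ω => X i ω ^ n i) μ) :
    Integrable (fun ω => ∏ i, X i ω ^ n i) μ := by
  have := (hX.comp (fun i x => x ^ n i) fun _ => measurable_id.pow_const _).integrable_finsetProd
    (fun i => (hm i).pow_const _) hint univ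
  simpa only [Finset.prod_fn, Function.comp_apply] using this

lemma iIndepFun.integral_fun_prod_pow (hX : iIndepFun X μ) (hm : ∀ i, Measurable (X i))
    (n : ι → ℕ) : ∫ ω, ∏ i, X i ω ^ n i ∂μ = ∏ i, ∫ ω, X i ω ^ n i ∂μ :=
  (hX.comp (fun i x => x ^ n i) fun _ => measurable_id.pow_const _).integral_fun_prod_eq_prod_integral
    fun i => ((hm i).pow_const _).aestronglyMeasurable

end IndependentProducts

section ThreeVariables

variable {Ω : Type*} [MeasurableSpace Ω] {μ : Measure Ω} {X Y Z : Ω → ℝ}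

lemma iIndepFun.integrable_pow_mul_pow_mul_pow (hXYZ : iIndepFun ![X, Y, Z] μ)
    (hX : Measurable X) (hY : Measurable Y) (hZ : Measurable Z) {a b c : ℕ}
    (hXa : Integrable (fun ω => X ω ^ a) μ) (hYb : Integrable (fun ω => Y ω ^ b) μ)
    (hZc : Integrable (fun ω => Z ω ^ c) μ) :
    Integrable (fun ω => X ω ^ a * Y ω ^ b * Z ω ^ c) μ := by
  have := hXYZ.integrable_fun_prod_pow (n := ![a, b, c]) (by simp [Fin.forall_fin_succ, *])
    (by simp [Fin.forall_fin_succ, *])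
  simpa [Fin.prod_univ_three] using this

lemma iIndepFun.integral_pow_mul_pow_mul_pow (hXYZ : iIndepFun ![X, Y, Z] μ)
    (hX : Measurable X) (hY : Measurable Y) (hZ : Measurable Z) (a b c : ℕ) :
    ∫ ω, X ω ^ a * Y ω ^ b * Z ω ^ c ∂μ =
      (∫ ω, X ω ^ a ∂μ) * (∫ ω, Y ω ^ b ∂μ) * ∫ ω, Z ω ^ c ∂μ := by
  have := hXYZ.integral_fun_prod_pow (by simp [Fin.forall_fin_succ, *]) ![a, b, c]
  simpa [Fin.prod_univ_three] using this

end ThreeVariables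

lemma HasLaw.integrable_comp {Ω 𝓧 : Type*} [MeasurableSpace Ω] [MeasurableSpace 𝓧] {X : Ω → 𝓧}
    {ν : Measure 𝓧} {μ : Measure Ω} (hX : HasLaw X ν μ) {f : 𝓧 → ℝ}
    (hf : Integrable f ν) : Integrable (f ∘ X) μ := by
  rw [← hX.map_eq] at hf
  exact (integrable_map_measure hf.aestronglyMeasurable hX.aemeasurable).mp hf

section GammaMoments

variable {a r : ℝ}

lemma gammaPDFReal_mul_pow_ae_eq (n : ℕ) :
    (fun x => gammaPDFReal a r x * x ^ n) =ᵐ[volume]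
      (Set.Ioi 0).indicator (fun x => r ^ a / Gamma a * (x ^ (a + n - 1) * exp (-(r * x)))) := by
  filter_upwards [Measure.ae_ne volume 0] with x hx
  rcases hx.lt_or_gt with hneg | hpos
  · simp [gammaPDFReal, hneg.not_ge, hneg.not_gt]
  · rw [Set.indicator_of_mem (Set.mem_Ioi.mpr hpos), gammaPDFReal, if_pos hpos.le,
      add_sub_right_comm, rpow_add_natCast hpos.ne']
    ring

lemma toReal_gammaPDF (ha : 0 < a) (hr : 0 < r) (x : ℝ) :
    (gammaPDF a r x).toReal = gammaPDFReal a r x :=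
  ENNReal.toReal_ofReal (gammaPDFReal_nonneg ha hr x)

lemma measurable_gammaPDF : Measurable (gammaPDF a r) :=
  (measurable_gammaPDFReal a r).ennreal_ofReal

lemma integrable_pow_gammaMeasure (ha : 0 < a) (hr : 0 < r) (n : ℕ) :
    Integrable (fun x : ℝ => x ^ n) (gammaMeasure a r) := by
  rw [gammaMeasure, integrable_withDensity_iff_integrable_smul' measurable_gammaPDF
    (ae_of_all _ fun _ => ENNReal.ofReal_lt_top)]
  simp only [toReal_gammaPDF ha hr, smul_eq_mul]
  rw [integrable_congr (gammaPDFReal_mul_pow_ae_eq n), integrable_indicator_iff measurableSet_Ioi]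
  have hint := integrableOn_rpow_mul_exp_neg_mul_rpow (s := a + n - 1) (by linarith) one_pos hr
  simp only [rpow_one, neg_mul] at hint
  exact hint.const_mul _

lemma integral_pow_gammaMeasure (ha : 0 < a) (hr : 0 < r) (n : ℕ) :
    ∫ x, x ^ n ∂gammaMeasure a r = Gamma (a + n) / (Gamma a * r ^ n) := by
  rw [gammaMeasure, integral_withDensity_eq_integral_toReal_smul measurable_gammaPDF
    (ae_of_all _ fun _ => ENNReal.ofReal_lt_top)]
  simp only [toReal_gammaPDF ha hr, smul_eq_mul]
  rw [integral_congr_ae (gammaPDFReal_mul_pow_ae_eq n), integral_indicator measurableSet_Ioi,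
    integral_const_mul, integral_rpow_mul_exp_neg_mul_Ioi (by positivity) hr,
    one_div, inv_rpow hr.le, rpow_add_natCast hr.ne']
  have := (Gamma_pos_of_pos ha).ne'
  field_simp

lemma integrable_pow_expMeasure (hr : 0 < r) (n : ℕ) :
    Integrable (fun x : ℝ => x ^ n) (expMeasure r) :=
  integrable_pow_gammaMeasure one_pos hr n

lemma integral_pow_expMeasure (hr : 0 < r) (n : ℕ) :
    ∫ x, x ^ n ∂expMeasure r = n.factorial / r ^ n := by
  rw [expMeasure, integral_pow_gammaMeasure one_pos hr, Gamma_one, one_mul, add_comm,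
    Gamma_nat_eq_factorial]

end GammaMoments

end ProbabilityTheory

lemma integral_pow_Icc_zero_one (n : ℕ) : ∫ x in Set.Icc (0 : ℝ) 1, x ^ n = 1 / (n + 1) := by
  rw [integral_Icc_eq_integral_Ioc, ← intervalIntegral.integral_of_le zero_le_one, integral_pow]
  simp

lemma Nat.cast_choose_mul_factorial {K : Type*} [Field K] [CharZero K] {i k : ℕ}
    (hik : i ≤ k) : (k.choose i : K) * i.factorial = k.factorial / (k - i).factorial := by
  rw [eq_div_iff (Nat.cast_ne_zero.mpr (k - i).factorial_ne_zero)]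
  exact_mod_cast Nat.choose_mul_factorial_mul_factorial hik

lemma mul_add_mul_pow_eq_sum {R : Type*} [CommSemiring R] (v z u : R) (k : ℕ) :
    v * (z + v * u) ^ k =
      ∑ i ∈ range (k + 1), (k.choose i : R) * (z ^ i * v ^ (k - i + 1) * u ^ (k - i)) := by
  rw [add_pow, mul_sum]
  refine sum_congr rfl fun i _ => ?_
  rw [mul_pow, pow_succ]
  ring

theorem stmt_6_general {Ω : Type*} [MeasurableSpace Ω] (μ : Measure Ω) [IsProbabilityMeasure μ]
    (r : ℝ) (hr : 0 < r)
    (ζ V U : Ω → ℝ) (hζ : Measurable ζ) (hV : Measurable V) (hU : Measurable U)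
    (hExp : Measure.map ζ μ = ProbabilityTheory.expMeasure r)
    (hUnif : Measure.map U μ = volume.restrict (Set.Icc (0:ℝ) 1))
    (hIndep : iIndepFun ![ζ, V, U] μ)
    (hVmom : ∀ j : ℕ, Integrable (fun ω => V ω ^ j) μ)
    (k : ℕ) :
    ∫ ω, V ω * (ζ ω + V ω * U ω) ^ k ∂μ =
      ∑ i ∈ range (k + 1),
        ((Nat.factorial k : ℝ) / ((Nat.factorial (k - i) : ℝ) * ((k - i + 1 : ℕ) : ℝ))) *
          (∫ ω, V ω ^ (k - i + 1) ∂μ) * r ^ (-(i : ℤ)) := by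
  have hζlaw : HasLaw ζ (expMeasure r) μ := ⟨hζ.aemeasurable, hExp⟩
  have hUlaw : HasLaw U (volume.restrict (Set.Icc 0 1)) μ := ⟨hU.aemeasurable, hUnif⟩
  have hζmom (i : ℕ) : ∫ ω, ζ ω ^ i ∂μ = i.factorial / r ^ i := by
    rw [← integral_pow_expMeasure hr, ← hζlaw.integral_comp (by fun_prop)]
    rfl
  have hUmom (j : ℕ) : ∫ ω, U ω ^ j ∂μ = 1 / (j + 1) := by
    rw [← integral_pow_Icc_zero_one, ← hUlaw.integral_comp (by fun_prop)]
    rfl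
  have hint (i : ℕ) : Integrable (fun ω => ζ ω ^ i * V ω ^ (k - i + 1) * U ω ^ (k - i)) μ :=
    hIndep.integrable_pow_mul_pow_mul_pow hζ hV hU
      (hζlaw.integrable_comp (integrable_pow_expMeasure hr i)) (hVmom _)
      (hUlaw.integrable_comp (continuous_pow _).integrableOn_Icc)
  simp_rw [mul_add_mul_pow_eq_sum (V _)]
  rw [integral_finsetSum _ fun i _ => (hint i).const_mul _]
  refine sum_congr rfl fun i hi => ?_
  rw [integral_const_mul, hIndep.integral_pow_mul_pow_mul_pow hζ hV hU, hζmom, hUmom, zpow_neg,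
    zpow_natCast, Nat.cast_succ, ← div_div,
    ← Nat.cast_choose_mul_factorial (Nat.le_of_lt_succ (mem_range.mp hi))]
  ring

/-- Brownian-case specialization: if `ζ` is exponential with rate `𝔯 > 0`, independent
of `V ≥ 0` (with finite moments `μ_j = E[V^j]`) and of `U` uniform on `[0,1]`, then
`E[V·(ζ + V·U)^k] = ∑_{i=0}^{k} (k!/((k-i)!·(k-i+1)))·μ_{k-i+1}·𝔯^{-i}`. -/
theorem stmt_6 {Ω : Type*} [MeasurableSpace Ω] (μ : Measure Ω) [IsProbabilityMeasure μ]
    (r : ℝ) (hr : 0 < r)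
    (ζ V U : Ω → ℝ) (hζ : Measurable ζ) (hV : Measurable V) (hU : Measurable U)
    (hVpos : 0 ≤ᵐ[μ] V)
    (hExp : Measure.map ζ μ = ProbabilityTheory.expMeasure r)
    (hUnif : Measure.map U μ = volume.restrict (Set.Icc (0:ℝ) 1))
    (hIndep : iIndepFun ![ζ, V, U] μ)
    (hVmom : ∀ j : ℕ, Integrable (fun ω => V ω ^ j) μ)
    (k : ℕ) :
    ∫ ω, V ω * (ζ ω + V ω * U ω) ^ k ∂μ =
      ∑ i ∈ range (k + 1),
        ((Nat.factorial k : ℝ) / ((Nat.factorial (k - i) : ℝ) * ((k - i + 1 : ℕ) : ℝ))) *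
          (∫ ω, V ω ^ (k - i + 1) ∂μ) * r ^ (-(i : ℤ)) :=
  stmt_6_general μ r hr ζ V U hζ hV hU hExp hUnif hIndep hVmom k
end
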